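/- arXiv:1608.06167 — 2 statements merged into one kernel-verified Lean document; each statement's English description precedes it below -/
import Mathlib

section
/- Let B = T(V)/I be an augmented graded algebra, where V is a vector space and I ⊆ ⊕_{n≥2} V^{⊗n} is a homogeneous ideal. Then the kernel M(B) of the multiplication map B⁺ ⊗_B B⁺ → B⁺ (where B⁺ is the augmentation ideal and B⁺ ⊗_B B⁺ = (B⁺ ⊗ B⁺)/Im(m⊗1 − 1⊗m)) is isomorphic to I/(T(V)⁺·I + I·T(V)⁺). -/
/-!
Write `T = T(V)`, `T⁺` for its augmentation ideal, `I = ker π` and, for a multiplicatively closed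
`P`, `P ⊗_m P` for `P ⊗ P` modulo the associator relations `ab ⊗ c - a ⊗ bc`.

Since `π : T⁺ → B⁺` is onto with kernel `I`, right exactness of `⊗` shows that `π ⊗ π` identifies
`B⁺ ⊗_m B⁺` with `T⁺ ⊗ T⁺` modulo the associator relations, `I ⊗ T⁺` and `T⁺ ⊗ I`. For the free
algebra, multiplication `T⁺ ⊗_m T⁺ → T⁺ T⁺` is injective: the map `D(v₁ ⋯ vₙ) = v₁ ⊗ v₂ ⋯ vₙ`
inverts it modulo the relations. Hence `B⁺ ⊗_m B⁺ ≅ T⁺T⁺ / (T⁺I + IT⁺)` compatibly with the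
maps to `B`, and as `I ⊆ T⁺T⁺` the kernel of multiplication is `I / (T⁺I + IT⁺)`.
-/

open TensorProduct LinearMap

/-- Instance search finds no subtraction on `P ⊗[K] P`, or on linear maps into it, compatible with
its `Module K` structure; this specialisation of `Submodule.addCommGroup`, made a local instance
below, provides one. -/
abbrev Submodule.addCommGroupOfAlgebra {K A : Type*} [CommRing K] [Ring A] [Algebra K A]
    (P : Submodule K A) : AddCommGroup P :=
  P.addCommGroup

theorem AlgHom.ker_mul_ker_le {K A C : Type*} [CommRing K] [Ring A] [Algebra K A] [Semiring C]
    [Algebra K C] (ε : A →ₐ[K] C) : ker ε.toLinearMap * ker ε.toLinearMap ≤ ker ε.toLinearMap :=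
  Submodule.mul_le.mpr fun _ hx y _ => by simp_all

section

attribute [local instance] Submodule.addCommGroupOfAlgebra

namespace Submodule

variable {K A B : Type*} [CommRing K] [Ring A] [Algebra K A] [Ring B] [Algebra K B]
  {P : Submodule K A} {Q : Submodule K B}

/-- The cokernel of `assocDefect hP` is the paper's `B⁺ ⊗_B B⁺` when `P = B⁺`. -/
def assocDefect (hP : P * P ≤ P) : P ⊗[K] (P ⊗[K] P) →ₗ[K] P ⊗[K] P :=
  (inclusion hP ∘ₗ mulMap' P P).rTensor P ∘ₗ (TensorProduct.assoc K P P P).symm.toLinearMap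
    - (inclusion hP ∘ₗ mulMap' P P).lTensor P

theorem assocDefect_tmul (hP : P * P ≤ P) (a b c : P) :
    assocDefect hP (a ⊗ₜ (b ⊗ₜ c)) =
      (⟨a * b, hP (mul_mem_mul a.2 b.2)⟩ : P) ⊗ₜ c
        - a ⊗ₜ (⟨b * c, hP (mul_mem_mul b.2 c.2)⟩ : P) :=
  rfl

theorem mulMap_comp_assocDefect (hP : P * P ≤ P) : mulMap P P ∘ₗ assocDefect hP = 0 :=
  ext_threefold' fun a b c => by simp [assocDefect_tmul, mul_assoc]

def balancedMul (hP : P * P ≤ P) : P ⊗[K] P ⧸ range (assocDefect hP) →ₗ[K] A :=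
  (range (assocDefect hP)).liftQ (mulMap P P)
    (range_le_ker_iff.mpr (mulMap_comp_assocDefect hP))

@[simp]
theorem balancedMul_mk (hP : P * P ≤ P) (ξ : P ⊗[K] P) :
    balancedMul hP (Submodule.Quotient.mk ξ) = mulMap P P ξ :=
  rfl

theorem eq_assocDefect [Module.Flat K A] [Module.Flat K P] (hP : P * P ≤ P)
    (ν : P ⊗[K] (P ⊗[K] P) →ₗ[K] P ⊗[K] P)
    (hν : ∀ a b c : P, TensorProduct.map P.subtype P.subtype (ν (a ⊗ₜ[K] (b ⊗ₜ[K] c)))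
      = ((a : A) * (b : A)) ⊗ₜ[K] (c : A) - (a : A) ⊗ₜ[K] ((b : A) * (c : A))) :
    ν = assocDefect hP :=
  ext_threefold' fun a b c => TensorProduct.map_injective_of_flat_flat _ _
    (subtype_injective P) (subtype_injective P) (by simp [hν, assocDefect_tmul])

variable (hP : P * P ≤ P) (hQ : Q * Q ≤ Q) (π : A →ₐ[K] B) {f : P →ₗ[K] Q}

theorem map_comp_assocDefect (hf : ∀ x, (f x : B) = π x) :
    TensorProduct.map f f ∘ₗ assocDefect hP
      = assocDefect hQ ∘ₗ TensorProduct.map f (TensorProduct.map f f) := by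
  have hf_mul (a b : P) : f ⟨a * b, hP (mul_mem_mul a.2 b.2)⟩
      = ⟨f a * f b, hQ (mul_mem_mul (f a).2 (f b).2)⟩ :=
    Subtype.ext (by simp [hf])
  refine ext_threefold' fun a b c => ?_
  simp [assocDefect_tmul, hf_mul]

theorem mulMap_comp_map (hf : ∀ x, (f x : B) = π x) :
    mulMap Q Q ∘ₗ TensorProduct.map f f = π.toLinearMap ∘ₗ mulMap P P :=
  ext' fun a b => by simp [hf]

theorem range_assocDefect_le_ker_mkQ_comp_map (hf : ∀ x, (f x : B) = π x) :
    range (assocDefect hP) ≤ ker ((range (assocDefect hQ)).mkQ ∘ₗ TensorProduct.map f f) := by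
  rw [range_le_ker_iff, comp_assoc, map_comp_assocDefect hP hQ π hf, ← comp_assoc,
    range_le_ker_iff.mp (ker_mkQ _).ge, zero_comp]

theorem ker_mkQ_comp_map (hf : ∀ x, (f x : B) = π x) (hf_surj : Function.Surjective f) :
    ker ((range (assocDefect hQ)).mkQ ∘ₗ TensorProduct.map f f)
      = range (assocDefect hP) ⊔ ker (TensorProduct.map f f) := by
  refine le_antisymm (fun ξ hξ => ?_)
    (sup_le (range_assocDefect_le_ker_mkQ_comp_map hP hQ π hf) (ker_le_ker_comp _ _))
  obtain ⟨u, hu⟩ : TensorProduct.map f f ξ ∈ range (assocDefect hQ) := by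
    simpa [Submodule.Quotient.mk_eq_zero] using hξ
  obtain ⟨U, rfl⟩ :=
    TensorProduct.map_surjective hf_surj (TensorProduct.map_surjective hf_surj hf_surj) u
  refine mem_sup.mpr ⟨_, mem_range_self _ U, ξ - assocDefect hP U, ?_, by abel⟩
  rw [mem_ker, map_sub, ← comp_apply (TensorProduct.map f f), map_comp_assocDefect hP hQ π hf,
    comp_apply, hu, sub_self]

theorem map_mulMap_ker_map (hf : ∀ x, (f x : B) = π x) (hf_surj : Function.Surjective f)
    (hkerP : ker π.toLinearMap ≤ P) :
    (ker (TensorProduct.map f f)).map (mulMap P P)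
      = P * ker π.toLinearMap ⊔ ker π.toLinearMap * P := by
  have hexact : Function.Exact (inclusion hkerP) f := by
    rw [exact_iff, range_inclusion]
    ext x
    simp [← Subtype.coe_inj, hf]
  rw [TensorProduct.map_ker hexact hf_surj hexact hf_surj, Submodule.map_sup, ← range_comp,
    ← range_comp, mulMap_comp_lTensor, mulMap_comp_rTensor, mulMap_range, mulMap_range]

theorem ker_mulMap' : ker (mulMap' P P) = ker (mulMap P P) := by
  rw [← ker_comp_of_ker_eq_bot _ (ker_subtype (P * P))]
  rfl

/-- `ab ↦ [f a ⊗ f b]`, well defined because `hmul` says that `P ⊗_m P → P * P` is injective. -/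
noncomputable def mulToBalanced (hf : ∀ x, (f x : B) = π x)
    (hmul : ker (mulMap P P) ≤ range (assocDefect hP)) :
    ↥(P * P) →ₗ[K] Q ⊗[K] Q ⧸ range (assocDefect hQ) :=
  (ker (mulMap' P P)).liftQ ((range (assocDefect hQ)).mkQ ∘ₗ TensorProduct.map f f)
      (ker_mulMap'.trans_le (hmul.trans (range_assocDefect_le_ker_mkQ_comp_map hP hQ π hf))) ∘ₗ
    ((mulMap' P P).quotKerEquivOfSurjective (mulMap'_surjective P P)).symm.toLinearMap

theorem mulToBalanced_mulMap' (hf : ∀ x, (f x : B) = π x)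
    (hmul : ker (mulMap P P) ≤ range (assocDefect hP)) (ξ : P ⊗[K] P) :
    mulToBalanced hP hQ π hf hmul (mulMap' P P ξ)
      = (range (assocDefect hQ)).mkQ (TensorProduct.map f f ξ) := by
  simp [mulToBalanced, quotKerEquivOfSurjective_symm_apply]

variable {hP hQ π} {hf : ∀ x, (f x : B) = π x}
  {hmul : ker (mulMap P P) ≤ range (assocDefect hP)}

theorem mulToBalanced_comp_mulMap' :
    mulToBalanced hP hQ π hf hmul ∘ₗ mulMap' P P
      = (range (assocDefect hQ)).mkQ ∘ₗ TensorProduct.map f f :=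
  LinearMap.ext (mulToBalanced_mulMap' hP hQ π hf hmul)

theorem mulToBalanced_surjective (hf_surj : Function.Surjective f) :
    Function.Surjective (mulToBalanced hP hQ π hf hmul) := by
  refine .of_comp (g := mulMap' P P) ?_
  rw [← coe_comp, mulToBalanced_comp_mulMap', coe_comp]
  exact (mkQ_surjective _).comp (TensorProduct.map_surjective hf_surj hf_surj)

theorem balancedMul_mulToBalanced (x : ↥(P * P)) :
    balancedMul hQ (mulToBalanced hP hQ π hf hmul x) = π x := by
  obtain ⟨ξ, rfl⟩ := mulMap'_surjective P P x
  rw [mulToBalanced_mulMap', mkQ_apply, balancedMul_mk, ← comp_apply (mulMap Q Q),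
    mulMap_comp_map π hf]
  rfl

theorem ker_mulToBalanced (hf_surj : Function.Surjective f) (hkerP : ker π.toLinearMap ≤ P) :
    ker (mulToBalanced hP hQ π hf hmul)
      = comap (P * P).subtype (P * ker π.toLinearMap ⊔ ker π.toLinearMap * P) := by
  have hmulMap : mulMap P P = (P * P).subtype ∘ₗ mulMap' P P := rfl
  rw [← map_mulMap_ker_map π hf hf_surj hkerP, ← bot_sup_eq (map _ _),
    ← range_eq_bot.mpr (mulMap_comp_assocDefect hP), range_comp, ← Submodule.map_sup,
    ← ker_mkQ_comp_map hP hQ π hf hf_surj, ← mulToBalanced_comp_mulMap', ker_comp, hmulMap,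
    Submodule.map_comp, map_comap_eq_of_surjective (mulMap'_surjective P P),
    comap_map_eq_of_injective (subtype_injective _)]

variable (hP hQ π hf hmul)

noncomputable def kerBalancedMulEquiv (hf_surj : Function.Surjective f)
    (hker_le : ker π.toLinearMap ≤ P * P) :
    ker (balancedMul hQ) ≃ₗ[K] ker π.toLinearMap ⧸
      comap (ker π.toLinearMap).subtype (P * ker π.toLinearMap ⊔ ker π.toLinearMap * P) :=
  let μI := mulToBalanced hP hQ π hf hmul ∘ₗ inclusion hker_le
  have hrange : range μI = ker (balancedMul hQ) := by
    refine le_antisymm (range_le_ker_iff.mpr (LinearMap.ext fun x => ?_)) fun y hy => ?_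
    · exact (balancedMul_mulToBalanced (hf := hf) (hmul := hmul) _).trans x.2
    · obtain ⟨x, rfl⟩ := mulToBalanced_surjective (hf := hf) (hmul := hmul) hf_surj y
      rw [mem_ker, balancedMul_mulToBalanced] at hy
      exact ⟨⟨x, hy⟩, rfl⟩
  have hkerμI : ker μI = comap (ker π.toLinearMap).subtype
      (P * ker π.toLinearMap ⊔ ker π.toLinearMap * P) := by
    rw [ker_comp, ker_mulToBalanced hf_surj (hker_le.trans hP), ← comap_comp,
      subtype_comp_inclusion]
  ((quotEquivOfEq _ _ hkerμI.symm).trans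
    (μI.quotKerEquivRange.trans (LinearEquiv.ofEq _ _ hrange))).symm

end Submodule

namespace TensorAlgebra

variable (K V : Type*) [CommRing K] [AddCommGroup V] [Module K V]

local notation "T" => TensorAlgebra K V

def augIdeal : Submodule K T :=
  ker (algebraMapInv : T →ₐ[K] K).toLinearMap

variable {K V}

theorem mem_augIdeal {x : T} : x ∈ augIdeal K V ↔ algebraMapInv x = 0 :=
  Iff.rfl

@[simp]
theorem algebraMapInv_ι (v : V) : algebraMapInv (ι K v : T) = 0 := by
  simp [algebraMapInv]

theorem ι_mem_augIdeal (v : V) : ι K v ∈ augIdeal K V :=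
  algebraMapInv_ι v

theorem mul_mem_augIdeal_right (x : T) {y : T} (hy : y ∈ augIdeal K V) :
    x * y ∈ augIdeal K V := by
  simp_all [mem_augIdeal]

variable (K V) in
theorem augIdeal_mul_le : augIdeal K V * augIdeal K V ≤ augIdeal K V :=
  AlgHom.ker_mul_ker_le _

variable (K V) in
def augProj : T →ₗ[K] augIdeal K V :=
  (LinearMap.id - Algebra.linearMap K T ∘ₗ (algebraMapInv : T →ₐ[K] K).toLinearMap).codRestrict _
    fun x => by simp [mem_augIdeal, algebraMap_leftInverse V _]

theorem coe_augProj (x : T) :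
    (augProj K V x : T) = x - algebraMap K T (algebraMapInv x) :=
  rfl

theorem augProj_of_mem {x : T} (hx : x ∈ augIdeal K V) : augProj K V x = ⟨x, hx⟩ :=
  Subtype.ext (by rw [coe_augProj, mem_augIdeal.mp hx, map_zero, sub_zero])

theorem sub_algebraMap_mem_range_ι_mul_top (x : T) :
    x - algebraMap K T (algebraMapInv x) ∈ range (ι K) * (⊤ : Submodule K T) := by
  induction x using TensorAlgebra.induction with
  | algebraMap r => simp [algebraMap_leftInverse V r]
  | ι v =>
    simpa using Submodule.mul_mem_mul (mem_range_self _ v) (Submodule.mem_top (x := (1 : T)))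
  | add x y hx hy => simpa [add_sub_add_comm] using add_mem hx hy
  | mul x y hx hy =>
    have hsplit : x * y - algebraMap K T (algebraMapInv (x * y))
        = (x - algebraMap K T (algebraMapInv x)) * y
          + algebraMapInv x • (y - algebraMap K T (algebraMapInv y)) := by
      rw [map_mul, map_mul, Algebra.smul_def, sub_mul, mul_sub]
      abel
    have hW : range (ι K) * ⊤ * ⊤ ≤ range (ι K) * (⊤ : Submodule K T) := by
      rw [mul_assoc]
      exact mul_right_mono le_top
    rw [hsplit]
    exact add_mem (hW (Submodule.mul_mem_mul hx Submodule.mem_top)) (Submodule.smul_mem _ _ hy)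

theorem augIdeal_le_range_ι_mul_top : augIdeal K V ≤ range (ι K) * (⊤ : Submodule K T) :=
  fun x hx => by simpa [mem_augIdeal.mp hx] using sub_algebraMap_mem_range_ι_mul_top x

variable (K V) in
def ιAug : V →ₗ[K] augIdeal K V :=
  (ι K).codRestrict _ ι_mem_augIdeal

@[simp]
theorem coe_ιAug (v : V) : (ιAug K V v : T) = ι K v :=
  rfl

variable (K V) in
/-- `T` acts on `T × (T⁺ ⊗ T)` by `v • (y, n) = (v y, v ⊗ y)`, so that `x • (1, 0) = (x, D x)` with
`D (v₁ ⋯ vₙ) = v₁ ⊗ v₂ ⋯ vₙ`; this `D` is `splitHead`. -/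
def splitHeadRep : T →ₐ[K] Module.End K (T × augIdeal K V ⊗[K] T) :=
  lift K
    { toFun := fun v => ((mulLeft K (ι K v)).prod (TensorProduct.mk K _ T (ιAug K V v))) ∘ₗ
        fst K T (augIdeal K V ⊗[K] T)
      map_add' := fun v w => by ext <;> simp [add_mul]
      map_smul' := fun c v => by ext <;> simp [smul_tmul'] }

variable (K V) in
def splitHead : T →ₗ[K] augIdeal K V ⊗[K] T :=
  snd K T _ ∘ₗ applyₗ ((1 : T), (0 : augIdeal K V ⊗[K] T)) ∘ₗ (splitHeadRep K V).toLinearMap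

theorem splitHeadRep_apply (x y : T) (n : augIdeal K V ⊗[K] T) :
    splitHeadRep K V x (y, n)
      = (x * y, algebraMapInv x • n + (mulRight K y).lTensor _ (splitHead K V x)) := by
  induction x using TensorAlgebra.induction generalizing y n with
  | algebraMap r => simp [splitHead, Algebra.smul_def, algebraMap_leftInverse V r]
  | ι v => simp [splitHead, splitHeadRep]
  | add a b ha hb =>
    simp only [map_add, LinearMap.add_apply, ha, hb, add_mul, add_smul, Prod.mk_add_mk]
    rw [add_add_add_comm]
  | mul a b ha hb =>
    have hD_mul : splitHead K V (a * b)
        = algebraMapInv a • splitHead K V b + (mulRight K b).lTensor _ (splitHead K V a) := by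
      change (splitHeadRep K V (a * b) (1, 0)).2 = _
      rw [map_mul, Module.End.mul_apply, hb, ha]
      simp [splitHead]
    rw [map_mul, Module.End.mul_apply, hb, ha, hD_mul]
    simp [smul_add, smul_smul, mul_assoc, add_assoc, ← lTensor_comp_apply]

theorem splitHead_mul (a b : T) :
    splitHead K V (a * b)
      = algebraMapInv a • splitHead K V b + (mulRight K b).lTensor _ (splitHead K V a) := by
  change (splitHeadRep K V (a * b) (1, 0)).2 = _
  simp [splitHeadRep_apply]

theorem splitHead_ι (v : V) : splitHead K V (ι K v) = ιAug K V v ⊗ₜ 1 := by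
  simp [splitHead, splitHeadRep]

theorem mkQ_lTensor_splitHead {a : T} (ha : a ∈ range (ι K) * (⊤ : Submodule K T))
    (b : augIdeal K V) :
    (range (Submodule.assocDefect (augIdeal_mul_le K V))).mkQ
        ((augProj K V ∘ₗ mulRight K (b : T)).lTensor _ (splitHead K V a))
      = (range (Submodule.assocDefect (augIdeal_mul_le K V))).mkQ (augProj K V a ⊗ₜ b) := by
  induction ha using Submodule.mul_induction_on' with
  | mem_mul_mem m hm t _ =>
    obtain ⟨v, rfl⟩ := hm
    set t' := augProj K V t
    have hD : splitHead K V (ι K v * t) = ιAug K V v ⊗ₜ t := by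
      simp [splitHead_mul, splitHead_ι]
    have htb : augProj K V (t * b) = algebraMapInv t • b + ⟨t' * b, mul_mem_augIdeal_right _ b.2⟩ :=
      Subtype.ext (by simp [t', coe_augProj, sub_mul, Algebra.smul_def, mem_augIdeal.mp b.2])
    have hvt : augProj K V (ι K v * t)
        = algebraMapInv t • ιAug K V v + ⟨ι K v * t', mul_mem_augIdeal_right _ t'.2⟩ :=
      Subtype.ext (by
        simp [t', coe_augProj, Algebra.smul_def, mul_sub, Algebra.commutes])
    rw [hD, lTensor_tmul, comp_apply, mulRight_apply, htb, hvt, tmul_add, add_tmul, tmul_smul,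
      smul_tmul', map_add, map_add]
    congr 1
    refine Eq.symm ((Submodule.Quotient.eq _).mpr ?_)
    exact ⟨ιAug K V v ⊗ₜ (t' ⊗ₜ b), rfl⟩
  | add x _ y _ hx hy => simp only [map_add, add_tmul, hx, hy]

theorem ker_mulMap_augIdeal_le :
    ker (Submodule.mulMap (augIdeal K V) (augIdeal K V))
      ≤ range (Submodule.assocDefect (augIdeal_mul_le K V)) := by
  have hleft_inv (ξ : augIdeal K V ⊗[K] augIdeal K V) :
      (range (Submodule.assocDefect (augIdeal_mul_le K V))).mkQ
          ((augProj K V).lTensor _ (splitHead K V (Submodule.mulMap _ _ ξ)))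
        = (range (Submodule.assocDefect (augIdeal_mul_le K V))).mkQ ξ := by
    induction ξ using TensorProduct.induction_on with
    | zero => simp
    | tmul a b =>
      have h := mkQ_lTensor_splitHead (augIdeal_le_range_ι_mul_top a.2) b
      rw [augProj_of_mem a.2, lTensor_comp_apply] at h
      simpa [splitHead_mul, mem_augIdeal.mp a.2] using h
    | add x y hx hy => simp only [map_add, hx, hy]
  intro ξ hξ
  simpa [mem_ker.mp hξ, eq_comm (a := (0 : _ ⧸ _)), Submodule.Quotient.mk_eq_zero] using hleft_inv ξ

end TensorAlgebra

end

theorem MB_iso_I_quotient_general (K V B : Type*) [Field K] [AddCommGroup V] [Module K V]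
    [Ring B] [Algebra K B]
    (π : TensorAlgebra K V →ₐ[K] B) (hπ : Function.Surjective π)
    (εT : TensorAlgebra K V →ₐ[K] K) (hεT : ∀ v : V, εT (TensorAlgebra.ι K v) = 0)
    (εB : B →ₐ[K] K) (hεB : εB.comp π = εT)
    (I : Submodule K (TensorAlgebra K V)) (hI : I = LinearMap.ker π.toLinearMap)
    (Tplus : Submodule K (TensorAlgebra K V))
    (hTplus : Tplus = LinearMap.ker εT.toLinearMap)
    (hI2 : I ≤ Tplus * Tplus)
    (Bplus : Submodule K B) (hBplus : Bplus = LinearMap.ker εB.toLinearMap)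
    (μ : (↥Bplus ⊗[K] ↥Bplus) →ₗ[K] B)
    (hμ : ∀ a b : Bplus, μ (a ⊗ₜ[K] b) = (a : B) * (b : B))
    (ν : (↥Bplus ⊗[K] (↥Bplus ⊗[K] ↥Bplus)) →ₗ[K] (↥Bplus ⊗[K] ↥Bplus))
    (hν : ∀ a b c : Bplus,
      TensorProduct.map Bplus.subtype Bplus.subtype (ν (a ⊗ₜ[K] (b ⊗ₜ[K] c)))
        = ((a : B) * (b : B)) ⊗ₜ[K] (c : B) - (a : B) ⊗ₜ[K] ((b : B) * (c : B)))
    (μbar : (@HasQuotient.Quotient _ _ (Submodule.hasQuotient (M := ↥Bplus ⊗[K] ↥Bplus))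
      (LinearMap.range ν)) →ₗ[K] B)
    (hμbar : μbar ∘ₗ (Submodule.mkQ (M := ↥Bplus ⊗[K] ↥Bplus) (LinearMap.range ν) :) = μ) :
    Nonempty ((LinearMap.ker μbar) ≃ₗ[K]
      (↥I ⧸ Submodule.comap I.subtype (Tplus * I + I * Tplus))) := by
  obtain rfl : εT = TensorAlgebra.algebraMapInv :=
    TensorAlgebra.hom_ext (LinearMap.ext fun v => by simpa using hεT v)
  subst hTplus hI hBplus
  have hBmul := AlgHom.ker_mul_ker_le εB
  obtain rfl := Submodule.eq_assocDefect hBmul ν hν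
  obtain rfl : μ = Submodule.mulMap _ _ := TensorProduct.ext' hμ
  obtain rfl : μbar = Submodule.balancedMul hBmul := Submodule.linearMap_qext _ hμbar
  have hεBπ (x : TensorAlgebra K V) : εB (π x) = TensorAlgebra.algebraMapInv x :=
    AlgHom.congr_fun hεB x
  let f : TensorAlgebra.augIdeal K V →ₗ[K] ker εB.toLinearMap :=
    π.toLinearMap.restrict fun x hx => (hεBπ x).trans hx
  have hf_surj : Function.Surjective f := fun y => by
    obtain ⟨x, hx⟩ := hπ y
    exact ⟨⟨x, (hεBπ x).symm.trans (hx ▸ y.2)⟩, Subtype.ext hx⟩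
  exact ⟨Submodule.kerBalancedMulEquiv (TensorAlgebra.augIdeal_mul_le K V) hBmul π (f := f)
    (fun _ => rfl) TensorAlgebra.ker_mulMap_augIdeal_le hf_surj hI2⟩

/-- Let `B = T(V)/I` be an augmented graded algebra, where `V` is a vector space and
`I ⊆ ⊕_{n≥2} V^{⊗n}` is a homogeneous ideal (here: `I` is the kernel of a surjective
algebra map `π : T(V) → B`, it is contained in `(T(V)⁺)²  = ⊕_{n≥2} V^{⊗n}` and is
stable under the homogeneous projections of the standard grading of `T(V)`). Then the
kernel `M(B)` of the multiplication map `B⁺ ⊗_B B⁺ → B`, where `B⁺` is the augmentation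
ideal and `B⁺ ⊗_B B⁺ = (B⁺ ⊗ B⁺)/Im(m⊗1 − 1⊗m)`, is isomorphic to
`I/(T(V)⁺·I + I·T(V)⁺)`. -/
theorem MB_iso_I_quotient (K V B : Type*) [Field K] [AddCommGroup V] [Module K V]
    [Ring B] [Algebra K B]
    (π : TensorAlgebra K V →ₐ[K] B) (hπ : Function.Surjective π)
    (εT : TensorAlgebra K V →ₐ[K] K) (hεT : ∀ v : V, εT (TensorAlgebra.ι K v) = 0)
    (εB : B →ₐ[K] K) (hεB : εB.comp π = εT)
    (I : Submodule K (TensorAlgebra K V)) (hI : I = LinearMap.ker π.toLinearMap)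
    (Tplus : Submodule K (TensorAlgebra K V))
    (hTplus : Tplus = LinearMap.ker εT.toLinearMap)
    (hI2 : I ≤ Tplus * Tplus)
    (hIhom : ∀ x ∈ I, ∀ n : ℕ,
      ((DirectSum.decompose
          ((LinearMap.range (TensorAlgebra.ι K : V →ₗ[K] TensorAlgebra K V) ^ ·) :
            ℕ → Submodule K (TensorAlgebra K V)) x) n : TensorAlgebra K V) ∈ I)
    (Bplus : Submodule K B) (hBplus : Bplus = LinearMap.ker εB.toLinearMap)
    (μ : (↥Bplus ⊗[K] ↥Bplus) →ₗ[K] B)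
    (hμ : ∀ a b : Bplus, μ (a ⊗ₜ[K] b) = (a : B) * (b : B))
    (ν : (↥Bplus ⊗[K] (↥Bplus ⊗[K] ↥Bplus)) →ₗ[K] (↥Bplus ⊗[K] ↥Bplus))
    (hν : ∀ a b c : Bplus,
      TensorProduct.map Bplus.subtype Bplus.subtype (ν (a ⊗ₜ[K] (b ⊗ₜ[K] c)))
        = ((a : B) * (b : B)) ⊗ₜ[K] (c : B) - (a : B) ⊗ₜ[K] ((b : B) * (c : B)))
    (μbar : (@HasQuotient.Quotient _ _ (Submodule.hasQuotient (M := ↥Bplus ⊗[K] ↥Bplus))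
      (LinearMap.range ν)) →ₗ[K] B)
    (hμbar : μbar ∘ₗ (Submodule.mkQ (M := ↥Bplus ⊗[K] ↥Bplus) (LinearMap.range ν) :) = μ) :
    Nonempty ((LinearMap.ker μbar) ≃ₗ[K]
      (↥I ⧸ Submodule.comap I.subtype (Tplus * I + I * Tplus))) :=
  MB_iso_I_quotient_general K V B π hπ εT hεT εB hεB I hI Tplus hTplus hI2 Bplus hBplus μ hμ ν hν
    μbar hμbar
end

section
/- Let m = 4a with a ≥ 1, ω a primitive m-th root of unity, and suppose (i,k) and (p,q) are pairs with 1 ≤ i, p < m/2, 1 ≤ k, q < m, ω^{ik} = −1 = ω^{pq}, and ω^{iq + pk} = 1. Then i and p have the same parity; moreover if k and q are both odd then i·(k−q) ≡ 0 (mod m) implies k ≡ q (mod m/gcd(i,m)). -/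
private lemma aux_par : ∀ a : ℕ, 1 ≤ a → ∀ i k p q t u : ℕ,
    i * k = 2 * a * (2 * t + 1) → p * q = 2 * a * (2 * u + 1) →
    (4 * a ∣ i * q + p * k) → Odd i → Even p → False := by
  intro a
  induction a using Nat.strong_induction_on with
  | _ a ih =>
    intro ha i k p q t u h1 h2 h3 hi hp
    rcases Nat.even_or_odd a with hae | hao
    · -- inductive step: a even
      obtain ⟨a', rfl⟩ := hae
      have ha' : 1 ≤ a' := by omega
      -- k is even
      have hek : Even k := by
        have : Even (i * k) := by
          rw [h1]; exact ⟨(a' + a') * (2 * t + 1), by ring⟩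
        rcases Nat.even_mul.mp this with h | h
        · exact absurd h (Nat.not_even_iff_odd.mpr hi)
        · exact h
      obtain ⟨k', rfl⟩ := hek
      have h1' : i * k' = 2 * a' * (2 * t + 1) := by
        have h2k : 2 * (i * k') = 2 * (2 * a' * (2 * t + 1)) := by
          rw [show 2 * (i * k') = i * (k' + k') by ring, h1]; ring
        exact Nat.eq_of_mul_eq_mul_left (by norm_num) h2k
      -- q is even
      have h2dvd : (2 : ℕ) ∣ i * q + p * (k' + k') := dvd_trans ⟨2 * (a' + a'), by ring⟩ h3
      have heq : Even q := by
        have hpk : Even (p * (k' + k')) := hp.mul_right _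
        have hsum : Even (i * q + p * (k' + k')) := by
          obtain ⟨c, hc⟩ := h2dvd
          exact ⟨c, by omega⟩
        have hiq : Even (i * q) := (Nat.even_add.mp hsum).mpr hpk
        rcases Nat.even_mul.mp hiq with h | h
        · exact absurd h (Nat.not_even_iff_odd.mpr hi)
        · exact h
      obtain ⟨q', rfl⟩ := heq
      have h2' : p * q' = 2 * a' * (2 * u + 1) := by
        have h2q : 2 * (p * q') = 2 * (2 * a' * (2 * u + 1)) := by
          rw [show 2 * (p * q') = p * (q' + q') by ring, h2]; ring
        exact Nat.eq_of_mul_eq_mul_left (by norm_num) h2q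
      have h3' : 4 * a' ∣ i * q' + p * k' := by
        obtain ⟨w, hw⟩ := h3
        refine ⟨w, ?_⟩
        have : 2 * (i * q' + p * k') = 2 * (4 * a' * w) := by
          rw [show 2 * (i * q' + p * k') = i * (q' + q') + p * (k' + k') by ring, hw]; ring
        exact Nat.eq_of_mul_eq_mul_left (by norm_num) this
      exact ih a' (by omega) ha' i k' p q' t u h1' h2' h3' hi hp
    · -- base case: a odd
      obtain ⟨p', rfl⟩ := hp
      have h2' : p' * q = a * (2 * u + 1) := by
        have : 2 * (p' * q) = 2 * (a * (2 * u + 1)) := by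
          rw [show 2 * (p' * q) = (p' + p') * q by ring, h2]; ring
        exact Nat.eq_of_mul_eq_mul_left (by norm_num) this
      have hq : Odd q := by
        have : Odd (p' * q) := by rw [h2']; exact hao.mul (by exact ⟨u, by ring⟩)
        exact (Nat.odd_mul.mp this).2
      have hsum_odd : Odd (i * q + (p' + p') * k) := by
        exact (hi.mul hq).add_even ((Even.add_self p').mul_right _)
      have hsum_even : Even (i * q + (p' + p') * k) := by
        obtain ⟨c, hc⟩ := dvd_trans (⟨2 * a, by ring⟩ : (2:ℕ) ∣ 4 * a) h3
        exact ⟨c, by omega⟩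
      exact (Nat.not_even_iff_odd.mpr hsum_odd) hsum_even

/-- Let `m = 4a` with `a ≥ 1`, `ω` a primitive `m`-th root of unity, and suppose `(i,k)`
and `(p,q)` are pairs with `1 ≤ i, p < m/2`, `1 ≤ k, q < m`, `ω^{ik} = −1 = ω^{pq}`,
and `ω^{iq + pk} = 1`. Then `i` and `p` have the same parity; moreover if `k` and `q`
are both odd then `i·(k−q) ≡ 0 (mod m)` implies `k ≡ q (mod m / gcd(i,m))`. -/
theorem dihedral_pairs_parity (K : Type*) [Field K] [IsAlgClosed K] [CharZero K]
    (a m : ℕ) (ha : 1 ≤ a) (hm : m = 4 * a) (ω : K) (hω : IsPrimitiveRoot ω m)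
    (i k p q : ℕ) (hi1 : 1 ≤ i) (hi2 : i < m / 2) (hp1 : 1 ≤ p) (hp2 : p < m / 2)
    (hk1 : 1 ≤ k) (hk2 : k < m) (hq1 : 1 ≤ q) (hq2 : q < m)
    (h1 : ω ^ (i * k) = -1) (h2 : ω ^ (p * q) = -1) (h3 : ω ^ (i * q + p * k) = 1) :
    i % 2 = p % 2 ∧
    (Odd k → Odd q → (m : ℤ) ∣ (i : ℤ) * ((k : ℤ) - (q : ℤ)) →
      (k : ℤ) ≡ (q : ℤ) [ZMOD ((m / Nat.gcd i m : ℕ) : ℤ)]) := by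
  have hne : (-1 : K) ≠ 1 := by norm_num
  -- extract the "odd multiple of m/2" structure from ω^n = -1
  have key : ∀ n : ℕ, ω ^ n = -1 → ∃ t, n = 2 * a * (2 * t + 1) := by
    intro n hn
    have hdvd : m ∣ 2 * n := (hω.pow_eq_one_iff_dvd _).mp (by
      rw [two_mul, pow_add, hn]; ring)
    have hndvd : ¬ m ∣ n := fun h => hne (hn ▸ (hω.pow_eq_one_iff_dvd _).mpr h)
    obtain ⟨c, hc⟩ := hdvd
    have hnc : n = 2 * a * c := by
      have : 2 * n = 2 * (2 * a * c) := by rw [hc, hm]; ring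
      exact Nat.eq_of_mul_eq_mul_left (by norm_num) this
    rcases Nat.even_or_odd c with ⟨c', rfl⟩ | ⟨t, rfl⟩
    · exact absurd ⟨c', by rw [hnc, hm]; ring⟩ hndvd
    · exact ⟨t, by rw [hnc]⟩
  obtain ⟨t, ht⟩ := key _ h1
  obtain ⟨u, hu⟩ := key _ h2
  have h3' : 4 * a ∣ i * q + p * k := hm ▸ (hω.pow_eq_one_iff_dvd _).mp h3
  constructor
  · rcases Nat.even_or_odd i with hie | hio <;> rcases Nat.even_or_odd p with hpe | hpo
    · rw [Nat.even_iff.mp hie, Nat.even_iff.mp hpe]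
    · exact absurd (aux_par a ha p q i k u t hu ht (by rwa [Nat.add_comm] at h3') hpo hie) not_false
    · exact absurd (aux_par a ha i k p q t u ht hu h3' hio hpe) not_false
    · rw [Nat.odd_iff.mp hio, Nat.odd_iff.mp hpo]
  · intro _ _ hdvd
    set g := Nat.gcd i m with hg
    have hg0 : 0 < g := Nat.gcd_pos_of_pos_left _ hi1
    have hm0 : 0 < m := by omega
    rw [Int.modEq_iff_dvd]
    have hmg : (m : ℤ) = (g : ℤ) * ((m / g : ℕ) : ℤ) := by
      rw [← Nat.cast_mul, Nat.mul_div_cancel' (Nat.gcd_dvd_right i m)]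
    have hig : (i : ℤ) = (g : ℤ) * ((i / g : ℕ) : ℤ) := by
      rw [← Nat.cast_mul, Nat.mul_div_cancel' (Nat.gcd_dvd_left i m)]
    have hdvd' : ((m / g : ℕ) : ℤ) ∣ ((i / g : ℕ) : ℤ) * ((k : ℤ) - (q : ℤ)) := by
      have : (g : ℤ) * ((m / g : ℕ) : ℤ) ∣ (g : ℤ) * (((i / g : ℕ) : ℤ) * ((k : ℤ) - (q : ℤ))) := by
        rw [← hmg, ← mul_assoc, ← hig]; exact hdvd
      exact (mul_dvd_mul_iff_left (by exact_mod_cast hg0.ne' : (g : ℤ) ≠ 0)).mp this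
    have hcop : IsCoprime ((m / g : ℕ) : ℤ) ((i / g : ℕ) : ℤ) := by
      rw [Int.isCoprime_iff_gcd_eq_one, Int.gcd_natCast_natCast]
      exact Nat.Coprime.symm (Nat.coprime_div_gcd_div_gcd (Nat.gcd_pos_of_pos_left _ hi1))
    have hkq := hcop.dvd_of_dvd_mul_left hdvd'
    exact dvd_sub_comm.mp hkq
end
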